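/- Let (M, J, g) be a metallic pseudo-Riemannian manifold with twin metric G and ∇ a linear connection. If both (∇, g) and (∇, G) are Codazzi-coupled, then (∇*, J) is Codazzi-coupled, where ∇* is the g-conjugate connection of ∇. -/

import Mathlib

variable {A : Type*} [CommRing A] [Algebra ℝ A]
variable {V : Type*} [AddCommGroup V] [Module ℝ V] [Module A V] [IsScalarTower ℝ A V]

/-- Covariant derivative `(D_X T) Y` of a (1,1)-tensor field `T`. -/
def covT (D : V → V → V) (T : V → V) (X Y : V) : V := D X (T Y) - T (D X Y)

/-- `covM Dact D h X Y Z = (D_Z h)(X,Y)`, the covariant derivative of a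
(0,2)-tensor field `h`, where `Dact` is the action of vector fields on functions. -/
def covM (Dact : V → A → A) (D : V → V → V) (h : V → V → A) (X Y Z : V) : A :=
  Dact Z (h X Y) - h (D Z X) Y - h X (D Z Y)

/-!
Pairing with `g` shows that `∇*_Z J` is the `g`-adjoint of `∇_Z J`, so it suffices that
`g((∇_X J)W, Y)` is symmetric in `X` and `Y`. By the Leibniz rule
`∇G = (∇g)(J·,·) + g((∇J)·,·)` this quantity is `(∇_X G)(W,Y) - (∇_X g)(JW,Y)`, and both
`∇g` and `∇G` are totally symmetric, being covariant derivatives of symmetric tensors that are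
Codazzi-coupled with `∇`.
-/

section

variable {R M : Type*} [CommRing R] {Dact : M → R → R} {D Ds : M → M → M}

theorem covM_swap_of_symm {h : M → M → R} (hs : ∀ a b, h a b = h b a) (X Y Z : M) :
    covM Dact D h X Y Z = covM Dact D h Y X Z := by
  simp only [covM, hs X Y, hs (D Z X) Y, hs X (D Z Y)]
  ring

theorem covM_comm_of_codazzi {h : M → M → R} (hs : ∀ a b, h a b = h b a)
    (hC : ∀ X Y Z, covM Dact D h Y Z X = covM Dact D h X Y Z) (X Y Z : M) :
    covM Dact D h X Y Z = covM Dact D h X Z Y :=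
  (hC Z X Y).trans (covM_swap_of_symm hs Z X Y)

variable [AddCommGroup M] [Module R M]

theorem covM_comp_left (g : M →ₗ[R] M →ₗ[R] R) (J : M →ₗ[R] M) (X Y Z : M) :
    covM Dact D (fun a b => g (J a) b) X Y Z
      = covM Dact D (fun a b => g a b) (J X) Y Z + g (covT D J Z X) Y := by
  simp only [covM, covT, map_sub, LinearMap.sub_apply]
  ring

theorem covT_conjugate_adjoint {g : M →ₗ[R] M →ₗ[R] R} {J : M →ₗ[R] M}
    (hJsym : ∀ X Y, g (J X) Y = g X (J Y))
    (hDs : ∀ X Y Z, Dact Z (g X Y) = g (D Z X) Y + g X (Ds Z Y)) (X Y Z : M) :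
    g X (covT Ds J Z Y) = g (covT D J Z X) Y := by
  simp only [covT, map_sub, LinearMap.sub_apply]
  linear_combination hDs (J X) Y Z - hDs X (J Y) Z - congrArg (Dact Z) (hJsym X Y)
    + hJsym X (Ds Z Y) + hJsym (D Z X) Y

theorem eq_of_forall_apply_eq_of_nondegenerate {g : M →ₗ[R] M →ₗ[R] R}
    (hsym : ∀ X Y, g X Y = g Y X) (hnd : ∀ X, (∀ Y, g X Y = 0) → X = 0) {u v : M} (h : ∀ W, g W u = g W v) : u = v :=
  sub_eq_zero.mp <| hnd _ fun W => by rw [hsym, map_sub, h, sub_self]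

end

theorem conjugate_codazzi_J_general
    (Dact : V → A → A) (D Ds : V → V → V)
    (g : V →ₗ[A] V →ₗ[A] A) (J : V →ₗ[A] V)
    (hsym : ∀ X Y, g X Y = g Y X)
    (hJsym : ∀ X Y, g (J X) Y = g X (J Y))
    (hnd : ∀ X, (∀ Y, g X Y = 0) → X = 0)
    -- Ds is the g-conjugate of D
    (hDs : ∀ X Y Z, Dact Z (g X Y) = g (D Z X) Y + g X (Ds Z Y))
    -- (∇,g) Codazzi-coupled: (∇_X g)(Y,Z) = (∇_Z g)(X,Y)
    (hCodg : ∀ X Y Z, covM Dact D (fun a b => g a b) Y Z X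
      = covM Dact D (fun a b => g a b) X Y Z)
    -- (∇,G) Codazzi-coupled
    (hCodG : ∀ X Y Z, covM Dact D (fun a b => g (J a) b) Y Z X
      = covM Dact D (fun a b => g (J a) b) X Y Z) :
    ∀ X Y, covT Ds (⇑J) X Y = covT Ds (⇑J) Y X := by
  intro X Y
  have hGsym : ∀ a b, g (J a) b = g (J b) a := fun a b => (hJsym a b).trans (hsym _ _)
  refine eq_of_forall_apply_eq_of_nondegenerate hsym hnd fun W => ?_
  calc g W (covT Ds J X Y)
      = g (covT D J X W) Y := covT_conjugate_adjoint hJsym hDs W Y X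
    _ = covM Dact D (fun a b => g (J a) b) W Y X
          - covM Dact D (fun a b => g a b) (J W) Y X :=
        eq_sub_of_add_eq' (covM_comp_left g J W Y X).symm
    _ = covM Dact D (fun a b => g (J a) b) W X Y
          - covM Dact D (fun a b => g a b) (J W) X Y := by
        rw [covM_comm_of_codazzi hGsym hCodG, covM_comm_of_codazzi hsym hCodg]
    _ = g (covT D J Y W) X := (eq_sub_of_add_eq' (covM_comp_left g J W X Y).symm).symm
    _ = g W (covT Ds J Y X) := (covT_conjugate_adjoint hJsym hDs W X Y).symm

/-- if (∇,g) and (∇,G) are Codazzi-coupled, then (∇*,J) is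
Codazzi-coupled, where ∇* is the g-conjugate of ∇. -/
theorem conjugate_codazzi_J
    (Dact : V → A → A) (D Ds : V → V → V)
    (g : V →ₗ[A] V →ₗ[A] A) (J : V →ₗ[A] V) (p q : ℝ)
    (hsym : ∀ X Y, g X Y = g Y X)
    (hJsym : ∀ X Y, g (J X) Y = g X (J Y))
    (hJ2 : ∀ X, J (J X) = p • J X + q • X)
    (hnd : ∀ X, (∀ Y, g X Y = 0) → X = 0)
    -- Ds is the g-conjugate of D
    (hDs : ∀ X Y Z, Dact Z (g X Y) = g (D Z X) Y + g X (Ds Z Y))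
    -- (∇,g) Codazzi-coupled: (∇_X g)(Y,Z) = (∇_Z g)(X,Y)
    (hCodg : ∀ X Y Z, covM Dact D (fun a b => g a b) Y Z X
      = covM Dact D (fun a b => g a b) X Y Z)
    -- (∇,G) Codazzi-coupled
    (hCodG : ∀ X Y Z, covM Dact D (fun a b => g (J a) b) Y Z X
      = covM Dact D (fun a b => g (J a) b) X Y Z) :
    ∀ X Y, covT Ds (⇑J) X Y = covT Ds (⇑J) Y X :=
  conjugate_codazzi_J_general Dact D Ds g J hsym hJsym hnd hDs hCodg hCodG
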